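/- Disjointness of fixpoints of key-disjoint partitions: let φ : Multiset τ → Multiset τ be an additive monoid homomorphism and p : τ → α a function satisfying condition (C): for every r and every s ∈ φ({r}), p(s) = p(r). Let R₁ and R₂ be multisets such that for all x ∈ R₁ and y ∈ R₂, p(x) ≠ p(y). Define, for i ∈ {1, 2}, S_0(R_i) = dedup(R_i) and S_{n+1}(R_i) = dedup(R_i + φ(S_n(R_i))). Then for all n and m, no element belongs to both S_n(R₁) and S_m(R₂). -/
import Mathlib


/-- The fixpoint sequence with duplicate elimination:
`S 0 = dedup R`, `S (n+1) = dedup (R + φ (S n))`. -/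
def fixSeqD {τ : Type*} [DecidableEq τ] (φ : Multiset τ → Multiset τ)
    (R : Multiset τ) : ℕ → Multiset τ
  | 0 => R.dedup
  | n + 1 => (R + φ (fixSeqD φ R n)).dedup

/-- Disjointness of fixpoints of key-disjoint partitions. -/
theorem fixpoints_key_disjoint {τ : Type*} {α : Type*} [DecidableEq τ]
    (φ : Multiset τ → Multiset τ) (p : τ → α)
    (hφ0 : φ 0 = 0) (hφadd : ∀ a b : Multiset τ, φ (a + b) = φ a + φ b)
    (hC : ∀ r : τ, ∀ s ∈ φ {r}, p s = p r)
    (R₁ R₂ : Multiset τ)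
    (hdisj : ∀ x ∈ R₁, ∀ y ∈ R₂, p x ≠ p y) :
    ∀ n m, ∀ a : τ, a ∈ fixSeqD φ R₁ n → a ∈ fixSeqD φ R₂ m → False := by
  -- key lemma: elements of φ M have p-values coming from M
  have hφmem : ∀ (M : Multiset τ), ∀ s ∈ φ M, ∃ r ∈ M, p s = p r := by
    intro M
    induction M using Multiset.induction_on with
    | empty => intro s hs; rw [show (0 : Multiset τ) = 0 from rfl, hφ0] at hs; simp at hs
    | cons x M ih =>
      intro s hs
      rw [show (x ::ₘ M) = ({x} + M : Multiset τ) by simp, hφadd] at hs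
      rcases Multiset.mem_add.1 hs with h | h
      · exact ⟨x, by simp, hC x s h⟩
      · obtain ⟨r, hr, hpr⟩ := ih s h
        exact ⟨r, by simp [hr], hpr⟩
  have key : ∀ (R : Multiset τ) n, ∀ a ∈ fixSeqD φ R n, ∃ r ∈ R, p a = p r := by
    intro R n
    induction n with
    | zero => intro a ha; exact ⟨a, Multiset.mem_dedup.1 ha, rfl⟩
    | succ n ih =>
      intro a ha
      rw [fixSeqD, Multiset.mem_dedup, Multiset.mem_add] at ha
      rcases ha with h | h
      · exact ⟨a, h, rfl⟩
      · obtain ⟨s, hs, hps⟩ := hφmem _ a h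
        obtain ⟨r, hr, hpr⟩ := ih s hs
        exact ⟨r, hr, hps.trans hpr⟩
  intro n m a h1 h2
  obtain ⟨x, hx, hpx⟩ := key R₁ n a h1
  obtain ⟨y, hy, hpy⟩ := key R₂ m a h2
  exact hdisj x hx y hy (hpx ▸ hpy)
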